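/- In the non-completeness counterexample, S=[E_1,R_1,E_4,R_3,E_5] and S′=[E_1,R_1,E_2,R_2,E_3,R_3,E_5] are intersectable: there is a skeleton σ and b ∈ σ(E_1) with S|_b ∩ S′|_b ≠ ∅; this is consistent with the intersectability criterion since LLRSP(S,S′) + LLRSP(S̃,S̃′) ≤ |S|. -/

import Mathlib

/-- Kinds of item classes in a relational schema. -/
inductive ItemKind | entity | relationship
deriving DecidableEq

/-- Cardinalities. -/
inductive Card | one | many
deriving DecidableEq

/-- A relational schema: item classes with kinds, participation of entity
classes in relationship classes, and a cardinality function `card R E`. -/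
structure Schema where
  Class : Type
  kind : Class → ItemKind
  participates : Class → Class → Prop   -- `participates E R`
  card : Class → Class → Card           -- `card R E`

namespace Schema

/-- Condition (1) of relational paths: alternation between entity and
relationship classes, with participation at each consecutive pair. -/
def Alternates (S : Schema) (P : List S.Class) : Prop :=
  ∀ i a b, P[i]? = some a → P[i+1]? = some b →
    ((S.kind a = .entity ∧ S.kind b = .relationship ∧ S.participates a b) ∨
     (S.kind a = .relationship ∧ S.kind b = .entity ∧ S.participates b a))

/-- Condition (2): in every subsequence `[E, R, E']`, `E ≠ E'`. -/
def NoERE (S : Schema) (P : List S.Class) : Prop :=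
  ∀ i a b c, P[i]? = some a → P[i+1]? = some b → P[i+2]? = some c →
    S.kind a = .entity → a ≠ c

/-- Condition (3): in every subsequence `[R, E, R']` with `R = R'`,
`card (R, E) = many`. -/
def CardMany (S : Schema) (P : List S.Class) : Prop :=
  ∀ i a b c, P[i]? = some a → P[i+1]? = some b → P[i+2]? = some c →
    S.kind a = .relationship → a = c → S.card a b = .many

/-- A valid relational path. -/
def ValidPath (S : Schema) (P : List S.Class) : Prop :=
  P ≠ [] ∧ S.Alternates P ∧ S.NoERE P ∧ S.CardMany P

end Schema

/-- A relational skeleton instantiating a schema: items with classes and a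
symmetric adjacency relation, respecting participation and cardinality
constraints (`card = one` forces at most one adjacent relationship instance;
relationship instances have exactly one adjacent entity instance per
participating entity class). -/
structure Skeleton (S : Schema) where
  Item : Type
  classOf : Item → S.Class
  adj : Item → Item → Prop
  adj_symm : ∀ {i j}, adj i j → adj j i
  adj_alt : ∀ {i j}, adj i j →
    (S.kind (classOf i) = .entity ∧ S.kind (classOf j) = .relationship ∧
      S.participates (classOf i) (classOf j)) ∨
    (S.kind (classOf i) = .relationship ∧ S.kind (classOf j) = .entity ∧
      S.participates (classOf j) (classOf i))
  card_one : ∀ {e r r'}, S.kind (classOf e) = .entity →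
    S.card (classOf r) (classOf e) = .one → classOf r = classOf r' →
    adj e r → adj e r' → r = r'
  rel_unique : ∀ {r i j}, S.kind (classOf r) = .relationship →
    adj r i → adj r j → classOf i = classOf j → i = j
  rel_total : ∀ {r E}, S.kind (classOf r) = .relationship →
    S.participates E (classOf r) → ∃ e, classOf e = E ∧ adj r e

namespace Skeleton

variable {S : Schema} (σ : Skeleton S)

/-- Auxiliary recursion for terminal sets under bridge burning semantics:
`(tsetAux P b ℓ).1` is the terminal set `P^{1:ℓ+1}|_b` (0-indexed `ℓ`) and
`(tsetAux P b ℓ).2` is the set of all items visited up to step `ℓ`. -/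
def tsetAux (P : List S.Class) (b : σ.Item) : ℕ → Set σ.Item × Set σ.Item
  | 0 => ({b}, {b})
  | ℓ+1 =>
      let prev := tsetAux P b ℓ
      let cur : Set σ.Item :=
        {i | P[ℓ+1]? = some (σ.classOf i) ∧ (∃ j ∈ prev.1, σ.adj i j) ∧
             i ∉ prev.2}
      (cur, prev.2 ∪ cur)

/-- The terminal set `P^{1:ℓ+1}|_b` (so `ℓ` is 0-indexed: `tset P b 0 = {b}`). -/
def tset (P : List S.Class) (b : σ.Item) (ℓ : ℕ) : Set σ.Item :=
  (σ.tsetAux P b ℓ).1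

/-- The (full) terminal set `P|_b`. -/
def tfull (P : List S.Class) (b : σ.Item) : Set σ.Item :=
  σ.tset P b (P.length - 1)

end Skeleton

/-- `LLRSP(P,Q)`: the length of the longest required shared path: the largest
`ℓ ≥ 1` such that `P^{1:ℓ} = Q^{1:ℓ}` and in every skeleton, from every base,
the terminal set of the length-`ℓ` prefix is a singleton. -/
noncomputable def llrsp (S : Schema) (P Q : List S.Class) : ℕ :=
  sSup {ℓ | 1 ≤ ℓ ∧ ℓ ≤ P.length ∧ P.take ℓ = Q.take ℓ ∧
    ∀ (σ : Skeleton S) (b : σ.Item), P[0]? = some (σ.classOf b) →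
      ∃ x, σ.tset P b (ℓ-1) = {x}}

/-- Item classes of the non-completeness counterexample schema. -/
inductive C13 | E1 | E2 | E3 | E4 | E5 | R1 | R2 | R3
deriving DecidableEq

open C13 in
/-- The non-completeness counterexample schema: `R1=⟨E1,E2,E4⟩`,
`R2=⟨E2,E3⟩`, `R3=⟨E3,E4,E5⟩`, with all cardinalities `one`. -/
def S13 : Schema where
  Class := C13
  kind := fun c => match c with
    | R1 | R2 | R3 => .relationship
    | _ => .entity
  participates := fun e r =>
    (e, r) ∈ ([(E1,R1),(E2,R1),(E4,R1),(E2,R2),(E3,R2),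
               (E3,R3),(E4,R3),(E5,R3)] : List (C13 × C13))
  card := fun _ _ => .one

open C13 in
def P13 : List C13 := [E1,R1,E2,R2,E3]
open C13 in
def Q13 : List C13 := [E1,R1,E4,R3,E3,R2,E2]
open C13 in
def S14 : List C13 := [E1,R1,E4,R3,E5]
open C13 in
def Sp13 : List C13 := [E1,R1,E2,R2,E3,R3,E5]
open C13 in
def D1 : List C13 := [E2,R2,E3,R3,E4,R1,E2,R2,E3]
open C13 in
def D2 : List C13 := [E2,R2,E3,R3,E5]

/-! In the skeleton with a single item per class, `S` and `S′` are repetition-free chains of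
participating classes, so bridge burning never blocks the next item: each terminal set is the
item of the last class reached, `E_5` for both paths. For the bound, `S` and `S′` already differ
in their third class, as do their reversals, so each LLRSP is at most 2 and the sum is at most
4 < |S| = 5. -/

namespace Schema

def singletonSkeleton (S : Schema)
    (hS : ∀ {e r}, S.participates e r → S.kind e = .entity ∧ S.kind r = .relationship) :
    Skeleton S where
  Item := S.Class
  classOf := id
  adj i j := S.participates i j ∨ S.participates j i
  adj_symm h := h.symm
  adj_alt := by
    rintro i j (h | h)
    · exact .inl ⟨(hS h).1, (hS h).2, h⟩
    · exact .inr ⟨(hS h).2, (hS h).1, h⟩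
  card_one _ _ h _ _ := h
  rel_unique _ _ _ h := h
  rel_total {_ E} _ h := ⟨E, rfl, .inr h⟩

variable {S : Schema}
  {hS : ∀ {e r}, S.participates e r → S.kind e = .entity ∧ S.kind r = .relationship}
  {P : List S.Class} {b : S.Class}

theorem tsetAux_singletonSkeleton
    (hchain : P.IsChain fun a b => S.participates a b ∨ S.participates b a)
    (hnodup : P.Nodup) (hb : P[0]? = some b) {ℓ : ℕ} (hℓ : ℓ < P.length) :
    (S.singletonSkeleton hS).tsetAux P b ℓ = ({P[ℓ]}, {x | x ∈ P.take (ℓ + 1)}) := by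
  induction ℓ with
  | zero =>
    obtain rfl : P[0] = b := by simpa [List.getElem?_eq_getElem hℓ] using hb
    refine Prod.ext rfl ?_
    show ({P[0]} : Set S.Class) = _
    ext x
    simp [List.take_one, List.head?_eq_getElem?, List.getElem?_eq_getElem hℓ]
  | succ ℓ ih =>
    have hnext : {i | P[ℓ + 1]? = some i ∧
        (∃ j ∈ ({P[ℓ]} : Set S.Class), S.participates i j ∨ S.participates j i) ∧
        i ∉ {x | x ∈ P.take (ℓ + 1)}} = {P[ℓ + 1]} := by
      ext i
      simp only [List.getElem?_eq_getElem hℓ, Option.some.injEq, Set.mem_singleton_iff,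
        exists_eq_left, Set.mem_ofPred_eq, List.mem_take_iff_getElem, not_exists]
      constructor
      · exact fun h => h.1.symm
      · rintro rfl
        refine ⟨rfl, (List.isChain_iff_getElem.mp hchain ℓ hℓ).symm, fun j hj heq => ?_⟩
        have := hnodup.getElem_inj_iff.mp heq
        omega
    show (_, _) = _
    rw [ih (by omega)]
    refine Prod.ext hnext <|
      (congrArg (fun s : Set S.Class => {x | x ∈ P.take (ℓ + 1)} ∪ s) hnext).trans ?_
    ext x
    rw [List.take_add_one (i := ℓ + 1), List.getElem?_eq_getElem hℓ]
    simp only [Set.mem_union, Set.mem_ofPred_eq, Set.mem_singleton_iff, List.mem_append,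
      Option.toList_some, List.mem_singleton]

theorem mem_tfull_singletonSkeleton_iff
    (hchain : P.IsChain fun a b => S.participates a b ∨ S.participates b a)
    (hnodup : P.Nodup) (hb : P[0]? = some b) {x : S.Class} :
    x ∈ (S.singletonSkeleton hS).tfull P b ↔ P.getLast? = some x := by
  have hlen : P.length - 1 < P.length := by
    have := (List.getElem?_eq_some_iff.mp hb).1
    omega
  change x ∈ ((S.singletonSkeleton hS).tsetAux P b (P.length - 1)).1 ↔ _
  rw [tsetAux_singletonSkeleton hchain hnodup hb hlen, List.getLast?_eq_getElem?,
    List.getElem?_eq_getElem hlen, Option.some_inj, eq_comm]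
  exact Set.mem_singleton_iff

end Schema

theorem llrsp_le_of_getElem?_ne {S : Schema} {P Q : List S.Class} {k : ℕ}
    (h : P[k]? ≠ Q[k]?) : llrsp S P Q ≤ k :=
  csSup_le' fun ℓ ⟨_, _, htake, _⟩ => by
    by_contra! hk
    exact h (by simpa [List.getElem?_take, hk] using congrArg (·[k]?) htake)

theorem S13_participates_kind {e r : S13.Class} (h : S13.participates e r) :
    S13.kind e = .entity ∧ S13.kind r = .relationship := by
  cases e <;> cases r <;> simp_all [S13]

/-- in the non-completeness counterexample, `S` and `S′` are
intersectable, consistently with the intersectability criterion: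
`LLRSP(S,S′) + LLRSP(S̃,S̃′) ≤ |S|`. -/
theorem S_Sp_intersectable :
    (∃ (σ : Skeleton S13) (b : σ.Item), σ.classOf b = C13.E1 ∧
      (σ.tfull S14 b ∩ σ.tfull Sp13 b).Nonempty) ∧
    llrsp S13 S14 Sp13 + llrsp S13 S14.reverse Sp13.reverse ≤ S14.length := by
  have hS14 : (S14 : List C13).Nodup := by decide
  have hSp13 : (Sp13 : List C13).Nodup := by decide
  refine ⟨⟨S13.singletonSkeleton S13_participates_kind, C13.E1, rfl, C13.E5, ?_, ?_⟩, ?_⟩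
  · exact (Schema.mem_tfull_singletonSkeleton_iff (by simp [S14, S13]) hS14 rfl).mpr rfl
  · exact (Schema.mem_tfull_singletonSkeleton_iff (by simp [Sp13, S13]) hSp13 rfl).mpr rfl
  · have hfwd : llrsp S13 S14 Sp13 ≤ 2 := llrsp_le_of_getElem?_ne nofun
    have hrev : llrsp S13 S14.reverse Sp13.reverse ≤ 2 := llrsp_le_of_getElem?_ne nofun
    exact (Nat.add_le_add hfwd hrev).trans (by decide)
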